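/- arXiv:1810.05251 — 2 statements merged into one kernel-verified Lean document; each statement's English description precedes it below -/
import Mathlib

section
/- Let A be a nonzero m×n real matrix (n ≥ 1) and b ∈ ℝᵐ such that S = {y ∈ ℝⁿ : Ay ≤ b componentwise} is nonempty, and let τ > 0 be a Hoffman constant for the system, i.e., dist(y, S) ≤ τ·‖(Ay − b)₊‖ for every y ∈ ℝⁿ. Then for every x ∈ ℝⁿ, one step of the doubly stochastic alternating projection algorithm with stepsize α = 1/n satisfies Σ_{i=1}^{m} Σ_{j=1}^{n} p_{ij} dist(x⁺(i,j), S)² ≤ (1 − 1/(n·τ²·‖A‖_F²))·dist(x, S)², so the distance to the feasible set converges linearly in expectation. (Theorem 4.) -/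
open Matrix BigOperators

/-- Squared Frobenius norm of a matrix. -/
noncomputable def frobSq {m n : ℕ} (A : Matrix (Fin m) (Fin n) ℝ) : ℝ :=
  ∑ i, ∑ j, (A i j) ^ 2

/-- One step of the doubly stochastic alternating projection algorithm (Algorithm 2):
if the selected inequality `i` is satisfied, nothing changes; otherwise coordinate `j`
is updated via the Gauss–Seidel rule (with the convention `x⁺ = x` when `A i j = 0`). -/
noncomputable def dsapStep {m n : ℕ} (A : Matrix (Fin m) (Fin n) ℝ) (b : Fin m → ℝ)
    (α : ℝ) (x : EuclideanSpace ℝ (Fin n)) (i : Fin m) (j : Fin n) :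
    EuclideanSpace ℝ (Fin n) :=
  if A.mulVec x i ≤ b i then x
  else if A i j = 0 then x
  else WithLp.toLp 2 (Function.update x j (x j + α * ((b i - A.mulVec x i) / A i j)))

/-- The componentwise positive part `(A x - b)₊` of the residual. -/
noncomputable def posRes {m n : ℕ} (A : Matrix (Fin m) (Fin n) ℝ) (b : Fin m → ℝ)
    (x : EuclideanSpace ℝ (Fin n)) : EuclideanSpace ℝ (Fin m) :=
  WithLp.toLp 2 (fun i => max 0 (A.mulVec x i - b i))

/-! Let `z` be the point of `S` nearest to `x` and `r = (Ax - b)₊`. The pair `(i, j)` moves only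
coordinate `j`, by `-α rᵢ / aᵢⱼ`, so weighting by `aᵢⱼ²` and summing over `j` gives
`‖aᵢ‖² ‖x - z‖² - 2α rᵢ (A(x - z))ᵢ + nα² rᵢ²`. Feasibility of `z` gives `rᵢ (A(x - z))ᵢ ≥ rᵢ²`,
so the expected squared distance to `z` drops by `α(2 - nα) ‖r‖² / ‖A‖_F²`, which is
`‖r‖² / (n ‖A‖_F²)` for `α = 1/n`; the Hoffman bound turns `‖r‖²` into `dist(x, S)² / τ²`. -/

open Finset

section Coordinates

variable {ι : Type*} [Fintype ι] [DecidableEq ι]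

lemma dist_toLp_update_add_sq (x z : EuclideanSpace ℝ ι) (j : ι) (t : ℝ) :
    dist (WithLp.toLp 2 (Function.update x j (x j + t))) z ^ 2 =
      dist x z ^ 2 + t * (2 * (x j - z j) + t) := by
  rw [EuclideanSpace.dist_sq_eq, EuclideanSpace.dist_sq_eq, ← sub_eq_iff_eq_add',
    ← sum_sub_distrib, sum_eq_single j]
  · simp only [Function.update_self, Real.dist_eq, sq_abs]
    ring
  · intro k _ hk
    simp [hk]
  · simp

end Coordinates

lemma frobSq_pos {m n : ℕ} {A : Matrix (Fin m) (Fin n) ℝ} (hA : A ≠ 0) : 0 < frobSq A := by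
  obtain ⟨i, j, hij⟩ : ∃ i j, A i j ≠ 0 := by
    by_contra! h
    exact hA (Matrix.ext h)
  calc 0 < A i j ^ 2 := by positivity
    _ ≤ ∑ j', A i j' ^ 2 :=
      single_le_sum (f := fun j' => A i j' ^ 2) (fun _ _ => sq_nonneg _) (mem_univ j)
    _ ≤ frobSq A :=
      single_le_sum (f := fun i' => ∑ j', A i' j' ^ 2)
        (fun _ _ => sum_nonneg fun _ _ => sq_nonneg _) (mem_univ i)

section Step

variable {m n : ℕ} (A : Matrix (Fin m) (Fin n) ℝ) (b : Fin m → ℝ)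

lemma isClosed_setOf_mulVec_le :
    IsClosed {y : EuclideanSpace ℝ (Fin n) | ∀ i, A.mulVec y i ≤ b i} := by
  simp only [Set.ofPred_forall]
  exact isClosed_iInter fun i => isClosed_le
    ((continuous_apply i).comp (continuous_const.matrix_mulVec (PiLp.continuous_ofLp 2 _)))
    continuous_const

lemma posRes_apply (x : EuclideanSpace ℝ (Fin n)) (i : Fin m) :
    posRes A b x i = max 0 (A.mulVec x i - b i) := rfl

lemma posRes_sq_le_mul_mulVec_sub {z : EuclideanSpace ℝ (Fin n)} (hz : ∀ i, A.mulVec z i ≤ b i)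
    (x : EuclideanSpace ℝ (Fin n)) (i : Fin m) :
    posRes A b x i ^ 2 ≤ posRes A b x i * (A.mulVec x i - A.mulVec z i) := by
  rw [posRes_apply, sq]
  rcases max_cases 0 (A.mulVec x i - b i) with ⟨h, -⟩ | ⟨h, hpos⟩ <;> rw [h]
  · simp
  · exact mul_le_mul_of_nonneg_left (by linarith [hz i]) hpos.le

lemma sq_mul_dist_dsapStep_le (α : ℝ) (x z : EuclideanSpace ℝ (Fin n)) (i : Fin m) (j : Fin n) :
    A i j ^ 2 * dist (dsapStep A b α x i j) z ^ 2 ≤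
      A i j ^ 2 * dist x z ^ 2 - 2 * α * posRes A b x i * (A i j * (x j - z j)) +
        α ^ 2 * posRes A b x i ^ 2 := by
  unfold dsapStep
  split_ifs with hi hij
  · have hr : posRes A b x i = 0 := max_eq_left (by linarith)
    simp [hr]
  · simp only [hij]
    nlinarith [sq_nonneg (α * posRes A b x i)]
  · have hr : posRes A b x i = A.mulVec x i - b i := max_eq_right (by linarith [not_le.mp hi])
    rw [dist_toLp_update_add_sq, hr]
    refine le_of_eq ?_
    field_simp
    ring

theorem sum_sq_mul_dist_dsapStep_le {α : ℝ} (hα : 0 ≤ α) {z : EuclideanSpace ℝ (Fin n)}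
    (hz : ∀ i, A.mulVec z i ≤ b i) (x : EuclideanSpace ℝ (Fin n)) :
    ∑ i, ∑ j, A i j ^ 2 * dist (dsapStep A b α x i j) z ^ 2 ≤
      frobSq A * dist x z ^ 2 - α * (2 - n * α) * ‖posRes A b x‖ ^ 2 := by
  set r := posRes A b x
  have hrow : ∀ i, ∑ j, A i j * (x j - z j) = A.mulVec x i - A.mulVec z i := by
    simp [mulVec, dotProduct, mul_sub]
  calc ∑ i, ∑ j, A i j ^ 2 * dist (dsapStep A b α x i j) z ^ 2
      ≤ ∑ i, ∑ j, (A i j ^ 2 * dist x z ^ 2 - 2 * α * r i * (A i j * (x j - z j)) +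
          α ^ 2 * r i ^ 2) :=
        sum_le_sum fun i _ => sum_le_sum fun j _ => sq_mul_dist_dsapStep_le A b α x z i j
    _ = ∑ i, ((∑ j, A i j ^ 2) * dist x z ^ 2 -
          2 * α * r i * (A.mulVec x i - A.mulVec z i) + n * (α ^ 2 * r i ^ 2)) := by
        refine sum_congr rfl fun i _ => ?_
        rw [← hrow, sum_add_distrib, sum_sub_distrib, ← sum_mul, ← mul_sum, sum_const,
          card_univ, Fintype.card_fin, nsmul_eq_mul]
    _ ≤ ∑ i, ((∑ j, A i j ^ 2) * dist x z ^ 2 - α * (2 - n * α) * r i ^ 2) :=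
        sum_le_sum fun i _ => by
          nlinarith [mul_le_mul_of_nonneg_left (posRes_sq_le_mul_mulVec_sub A b hz x i) hα]
    _ = frobSq A * dist x z ^ 2 - α * (2 - n * α) * ‖r‖ ^ 2 := by
        rw [sum_sub_distrib, ← sum_mul, ← mul_sum, EuclideanSpace.real_norm_sq_eq, frobSq]
end Step

theorem dsap_linear_rate_hoffman_general {m n : ℕ} (hn : 1 ≤ n)
    (A : Matrix (Fin m) (Fin n) ℝ) (hA : A ≠ 0) (b : Fin m → ℝ)
    (S : Set (EuclideanSpace ℝ (Fin n)))
    (hS : S = {y : EuclideanSpace ℝ (Fin n) | ∀ i, A.mulVec y i ≤ b i})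
    (hS_ne : S.Nonempty)
    (τ : ℝ)
    (hhoffman : ∀ y : EuclideanSpace ℝ (Fin n),
      Metric.infDist y S ≤ τ * ‖posRes A b y‖)
    (x : EuclideanSpace ℝ (Fin n)) :
    ∑ i, ∑ j, ((A i j) ^ 2 / frobSq A) *
        (Metric.infDist (dsapStep A b (1 / (n : ℝ)) x i j) S) ^ 2 ≤
      (1 - 1 / ((n : ℝ) * τ ^ 2 * frobSq A)) * (Metric.infDist x S) ^ 2 := by
  obtain ⟨z, hzS, hxz⟩ := (hS ▸ isClosed_setOf_mulVec_le A b).exists_infDist_eq_dist hS_ne x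
  have hz : ∀ i, A.mulVec z i ≤ b i := by rwa [hS] at hzS
  have hF : 0 < frobSq A := frobSq_pos hA
  have hrate : 1 / (n : ℝ) * (2 - n * (1 / n)) = 1 / n := by
    have : (n : ℝ) ≠ 0 := Nat.cast_ne_zero.mpr (Nat.one_le_iff_ne_zero.mp hn)
    field_simp
    ring
  set d := Metric.infDist x S
  set r := ‖posRes A b x‖
  have hd_sq : d ^ 2 / τ ^ 2 ≤ r ^ 2 := div_le_of_le_mul₀ (sq_nonneg _) (sq_nonneg _) <| by
    rw [← mul_pow, mul_comm]
    exact pow_le_pow_left₀ Metric.infDist_nonneg (hhoffman x) 2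
  calc ∑ i, ∑ j, (A i j ^ 2 / frobSq A) * Metric.infDist (dsapStep A b (1 / n) x i j) S ^ 2
      ≤ (∑ i, ∑ j, A i j ^ 2 * dist (dsapStep A b (1 / n) x i j) z ^ 2) / frobSq A := by
        simp only [sum_div, div_mul_eq_mul_div]
        gcongr
        · exact Metric.infDist_nonneg
        · exact Metric.infDist_le_dist_of_mem hzS
    _ ≤ (frobSq A * d ^ 2 - 1 / n * r ^ 2) / frobSq A := by
        have key := sum_sq_mul_dist_dsapStep_le A b (α := 1 / n) (by positivity) hz x
        rw [hrate, ← hxz] at key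
        gcongr
    _ = d ^ 2 - r ^ 2 / (n * frobSq A) := by
        field_simp
    _ ≤ d ^ 2 - d ^ 2 / τ ^ 2 / (n * frobSq A) := by gcongr
    _ = (1 - 1 / (n * τ ^ 2 * frobSq A)) * d ^ 2 := by ring

/-- Theorem 4: if `S = {y : A y ≤ b}` is nonempty and `τ > 0` is a Hoffman
constant, i.e. `dist(y, S) ≤ τ ‖(A y - b)₊‖` for every `y`, then one step of the doubly
stochastic alternating projection algorithm with stepsize `α = 1/n` satisfies
`E[dist(x⁺, S)²] ≤ (1 - 1/(n τ² ‖A‖_F²)) dist(x, S)²`. -/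
theorem dsap_linear_rate_hoffman {m n : ℕ} (hn : 1 ≤ n)
    (A : Matrix (Fin m) (Fin n) ℝ) (hA : A ≠ 0) (b : Fin m → ℝ)
    (S : Set (EuclideanSpace ℝ (Fin n)))
    (hS : S = {y : EuclideanSpace ℝ (Fin n) | ∀ i, A.mulVec y i ≤ b i})
    (hS_ne : S.Nonempty)
    (τ : ℝ) (hτ : 0 < τ)
    (hhoffman : ∀ y : EuclideanSpace ℝ (Fin n),
      Metric.infDist y S ≤ τ * ‖posRes A b y‖)
    (x : EuclideanSpace ℝ (Fin n)) :
    ∑ i, ∑ j, ((A i j) ^ 2 / frobSq A) *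
        (Metric.infDist (dsapStep A b (1 / (n : ℝ)) x i j) S) ^ 2 ≤
      (1 - 1 / ((n : ℝ) * τ ^ 2 * frobSq A)) * (Metric.infDist x S) ^ 2 :=
  dsap_linear_rate_hoffman_general hn A hA b S hS hS_ne τ hhoffman x
end

section
/- Let f₁, …, f_m : ℝⁿ → ℝ be differentiable functions with gradients ∇f_i, such that f_i(y) ≥ 0 for all y and all i, and each ∇f_i is Lipschitz with constant L_i ≥ 0; set f = Σ_{i=1}^m f_i. Let x* ∈ ℝⁿ satisfy f(x*) = 0. Fix x ∈ ℝⁿ, α ∈ ℝ, and define x⁺(i,j) ∈ ℝⁿ by x⁺(i,j)_j = x_j − α·(∇f_i(x))_j and x⁺(i,j)_k = x_k for k ≠ j. Then (1/(m·n))·Σ_{i=1}^m Σ_{j=1}^n f(x⁺(i,j)) ≤ f(x) − (α/(m·n))·‖∇f(x)‖² + (α²·(Σ_{ℓ=1}^m L_ℓ)/(2·m·n))·(Σ_{i=1}^m L_i²)·‖x − x*‖². (Intermediate bound (eq. intermmediate) in the proof of Theorem 5.) -/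
/-! Each coordinate step `x⁺(i,j) = x - α (gᵢ x)ⱼ eⱼ` is controlled by the descent lemma for
`f = Σ fₗ`, whose gradient `Σ gₗ` is `(Σ Lₗ)`-Lipschitz:
`f x⁺ ≤ f x - α (gᵢ x)ⱼ (∇f x)ⱼ + (Σ Lₗ)/2 · α² (gᵢ x)ⱼ²`. Summing over `j` turns the linear term
into `⟪gᵢ x, ∇f x⟫` and the quadratic one into `‖gᵢ x‖²`; summing over `i` then gives `‖∇f x‖²`.
Finally `x*` minimizes every `fᵢ ≥ 0`, so `gᵢ x* = 0` and `‖gᵢ x‖ ≤ Lᵢ ‖x - x*‖`. -/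

open InnerProductSpace Finset

section Gradient

variable {E : Type*} [NormedAddCommGroup E] [InnerProductSpace ℝ E] [CompleteSpace E]

theorem HasGradientAt.sum {ι : Type*} {s : Finset ι} {f : ι → E → ℝ} {g : ι → E} {x : E}
    (h : ∀ i ∈ s, HasGradientAt (f i) (g i) x) :
    HasGradientAt (fun y => ∑ i ∈ s, f i y) (∑ i ∈ s, g i) x := by
  rw [hasGradientAt_iff_hasFDerivAt, map_sum]
  exact HasFDerivAt.fun_sum fun i hi => (h i hi).hasFDerivAt

theorem IsLocalMin.hasGradientAt_eq_zero {f : E → ℝ} {g a : E} (h : IsLocalMin f a)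
    (hf : HasGradientAt f g a) : g = 0 := by
  simpa using h.hasFDerivAt_eq_zero hf.hasFDerivAt

theorem le_add_inner_add_of_lipschitz_gradient {f : E → ℝ} {g : E → E} {L : ℝ}
    (hgrad : ∀ y, HasGradientAt f (g y) y) (hlip : ∀ y z, ‖g y - g z‖ ≤ L * ‖y - z‖) (x v : E) :
    f (x + v) ≤ f x + ⟪g x, v⟫_ℝ + L / 2 * ‖v‖ ^ 2 := by
  -- along the segment the excess over the quadratic model has nonpositive derivative
  set φ : ℝ → ℝ := fun t => f (x + t • v) - t * ⟪g x, v⟫_ℝ - L / 2 * t ^ 2 * ‖v‖ ^ 2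
  have hφ : ∀ t, HasDerivAt φ (⟪g (x + t • v) - g x, v⟫_ℝ - L * t * ‖v‖ ^ 2) t := by
    intro t
    have hline : HasDerivAt (fun s : ℝ => x + s • v) v t := by
      simpa using ((hasDerivAt_id t).smul_const v).const_add x
    have hf : HasDerivAt (fun s : ℝ => f (x + s • v)) ⟪g (x + t • v), v⟫_ℝ t := by
      simpa [Function.comp_def] using (hgrad (x + t • v)).hasFDerivAt.comp_hasDerivAt t hline
    have := (hf.sub ((hasDerivAt_id t).mul_const ⟪g x, v⟫_ℝ)).sub
      (((hasDerivAt_pow 2 t).const_mul (L / 2)).mul_const (‖v‖ ^ 2))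
    refine this.congr_deriv ?_
    simp only [inner_sub_left, Nat.cast_ofNat]
    ring
  have hφ' : ∀ t ∈ Set.Ioo (0 : ℝ) 1, ⟪g (x + t • v) - g x, v⟫_ℝ - L * t * ‖v‖ ^ 2 ≤ 0 := by
    intro t ht
    have := hlip (x + t • v) x
    rw [add_sub_cancel_left, norm_smul, Real.norm_of_nonneg ht.1.le] at this
    nlinarith [real_inner_le_norm (g (x + t • v) - g x) v, norm_nonneg v]
  have h01 : φ 1 ≤ φ 0 := antitoneOn_of_hasDerivWithinAt_nonpos (convex_Icc 0 1)
    (fun t _ => (hφ t).continuousAt.continuousWithinAt) (fun t _ => (hφ t).hasDerivWithinAt)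
    (by simpa using hφ') (by simp) (by simp) zero_le_one
  simp only [φ, one_smul, zero_smul, add_zero] at h01
  linarith

end Gradient

theorem EuclideanSpace.toLp_update_sub_eq_add_single {𝕜 ι : Type*} [RCLike 𝕜]
    [DecidableEq ι] (x : EuclideanSpace 𝕜 ι) (j : ι) (c : 𝕜) :
    WithLp.toLp 2 (Function.update x j (x j - c)) = x + EuclideanSpace.single j (-c) := by
  ext k
  by_cases h : k = j
  · subst h; simp [sub_eq_add_neg]
  · simp [h]

section CoordinateDescent

variable {n : ℕ} {F : EuclideanSpace ℝ (Fin n) → ℝ}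
  {G : EuclideanSpace ℝ (Fin n) → EuclideanSpace ℝ (Fin n)} {K : ℝ}

theorem sum_coordinate_update_le (hgrad : ∀ y, HasGradientAt F (G y) y)
    (hlip : ∀ y z, ‖G y - G z‖ ≤ K * ‖y - z‖) (x u : EuclideanSpace ℝ (Fin n)) (α : ℝ) :
    ∑ j, F (WithLp.toLp 2 (Function.update x j (x j - α * u j))) ≤
      n * F x - α * ⟪u, G x⟫_ℝ + K / 2 * α ^ 2 * ‖u‖ ^ 2 := by
  have hstep : ∀ j, F (WithLp.toLp 2 (Function.update x j (x j - α * u j))) ≤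
      F x - α * (u j * G x j) + K / 2 * α ^ 2 * u j ^ 2 := by
    intro j
    have h := le_add_inner_add_of_lipschitz_gradient hgrad hlip x
      (EuclideanSpace.single j (-(α * u j)))
    rw [EuclideanSpace.inner_single_right, PiLp.norm_single, Real.norm_eq_abs, sq_abs,
      conj_trivial] at h
    rw [EuclideanSpace.toLp_update_sub_eq_add_single]
    exact h.trans_eq (by ring)
  calc _ ≤ ∑ j, (F x - α * (u j * G x j) + K / 2 * α ^ 2 * u j ^ 2) :=
        sum_le_sum fun j _ => hstep j
    _ = _ := by
      simp only [sum_add_distrib, sum_sub_distrib, ← mul_sum, EuclideanSpace.real_norm_sq_eq,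
        PiLp.inner_apply]
      simp [mul_comm]

theorem sum_sum_coordinate_update_le (hgrad : ∀ y, HasGradientAt F (G y) y)
    (hlip : ∀ y z, ‖G y - G z‖ ≤ K * ‖y - z‖) {m : ℕ} (u : Fin m → EuclideanSpace ℝ (Fin n))
    (x : EuclideanSpace ℝ (Fin n)) (hu : ∑ i, u i = G x) (α : ℝ) :
    ∑ i, ∑ j, F (WithLp.toLp 2 (Function.update x j (x j - α * u i j))) ≤
      m * n * F x - α * ‖G x‖ ^ 2 + K / 2 * α ^ 2 * ∑ i, ‖u i‖ ^ 2 :=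
  calc _ ≤ ∑ i, (n * F x - α * ⟪u i, G x⟫_ℝ + K / 2 * α ^ 2 * ‖u i‖ ^ 2) :=
        sum_le_sum fun i _ => sum_coordinate_update_le hgrad hlip x (u i) α
    _ = _ := by
      simp only [sum_add_distrib, sum_sub_distrib, ← mul_sum, ← sum_inner, hu,
        real_inner_self_eq_norm_sq]
      simp only [sum_const, card_univ, Fintype.card_fin, nsmul_eq_mul]
      ring

end CoordinateDescent

/-- intermediate bound (eq. intermmediate) in the proof of Theorem 5.
With `f = Σᵢ fᵢ`, where each `fᵢ : ℝⁿ → ℝ` is nonnegative with `Lᵢ`-Lipschitz gradient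
`gᵢ`, and `f(x*) = 0`, for every `x` and `α` the averaged value of `f` over all doubly
stochastic gradient updates `x⁺(i,j)` satisfies
`(1/(mn)) Σᵢⱼ f(x⁺(i,j)) ≤ f(x) - (α/(mn)) ‖∇f(x)‖² + (α² (Σ Lℓ)/(2mn)) (Σ Lᵢ²) ‖x - x*‖²`. -/
theorem dsg_intermediate_bound {m n : ℕ}
    (f : Fin m → EuclideanSpace ℝ (Fin n) → ℝ)
    (g : Fin m → EuclideanSpace ℝ (Fin n) → EuclideanSpace ℝ (Fin n))
    (hgrad : ∀ i y, HasGradientAt (f i) (g i y) y)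
    (hnonneg : ∀ i y, 0 ≤ f i y)
    (L : Fin m → ℝ) (hL : ∀ i, 0 ≤ L i)
    (hlip : ∀ i y z, ‖g i y - g i z‖ ≤ L i * ‖y - z‖)
    (xstar : EuclideanSpace ℝ (Fin n)) (hmin : ∑ i, f i xstar = 0)
    (x : EuclideanSpace ℝ (Fin n)) (α : ℝ) :
    (1 / ((m : ℝ) * n)) *
        ∑ i, ∑ j, (∑ l, f l (WithLp.toLp 2 (Function.update x j (x j - α * g i x j)))) ≤
      ∑ i, f i x - (α / ((m : ℝ) * n)) * ‖∑ i, g i x‖ ^ 2 +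
        (α ^ 2 * (∑ l, L l) / (2 * (m : ℝ) * n)) * (∑ i, L i ^ 2) *
          ‖x - xstar‖ ^ 2 := by
  have hlip_sum (y z) : ‖∑ l, g l y - ∑ l, g l z‖ ≤ (∑ l, L l) * ‖y - z‖ :=
    calc _ ≤ ∑ l, ‖g l y - g l z‖ := by rw [← sum_sub_distrib]; exact norm_sum_le _ _
      _ ≤ _ := by rw [sum_mul]; exact sum_le_sum fun l _ => hlip l y z
  have hg_bound (i) : ‖g i x‖ ^ 2 ≤ L i ^ 2 * ‖x - xstar‖ ^ 2 := by
    have hmin_i : IsLocalMin (f i) xstar := Filter.Eventually.of_forall fun y => by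
      rw [(sum_eq_zero_iff_of_nonneg fun l _ => hnonneg l xstar).1 hmin i (mem_univ i)]
      exact hnonneg i y
    have := hlip i x xstar
    rw [hmin_i.hasGradientAt_eq_zero (hgrad i xstar), sub_zero] at this
    rw [← mul_pow]
    gcongr
  have hsum := sum_sum_coordinate_update_le (fun y => HasGradientAt.sum fun l _ => hgrad l y)
    hlip_sum (fun i => g i x) x rfl α
  have hK : 0 ≤ ∑ l, L l := sum_nonneg fun l _ => hL l
  have hF : 0 ≤ ∑ l, f l x := sum_nonneg fun l _ => hnonneg l x
  rcases eq_or_ne ((m : ℝ) * n) 0 with hmn | hmn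
  -- for `m n = 0` both sides collapse through `x / 0 = 0`
  · simp [hmn, mul_assoc, hF]
  obtain ⟨hm, hn⟩ := mul_ne_zero_iff.1 hmn
  calc _ ≤ (1 / ((m : ℝ) * n)) * (m * n * (∑ l, f l x) - α * ‖∑ l, g l x‖ ^ 2 +
          (∑ l, L l) / 2 * α ^ 2 * ((∑ i, L i ^ 2) * ‖x - xstar‖ ^ 2)) := by
        gcongr
        refine hsum.trans ?_
        gcongr
        rw [sum_mul]
        exact sum_le_sum fun i _ => hg_bound i
    _ = _ := by
        field_simp
end
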